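/- arXiv:1908.03633 — 3 statements merged into one kernel-verified Lean document; each statement's English description precedes it below -/
import Mathlib

section
/- Let A be an m×n real matrix and set λ = 1/√(‖A‖² + 1), where ‖A‖ is the ℓ²-operator norm of A, and τ = 1/λ. Then the symmetric block matrix V = [[τ·I, 0, −Aᵀ], [0, τ·I, I], [−A, I, τ·I]] is positive semidefinite. -/
/-!
Write `B = [-A  I]`, so that `V = [[τ I, Bᵀ], [B, τ I]]`. By the C*-identity,
`‖B‖² = ‖B Bᵀ‖ = ‖A Aᵀ + I‖ ≤ ‖A‖² + 1 = τ²`. Hence for `x = (y, w)` the cross term of the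
quadratic form satisfies `2 ⟪B y, w⟫ ≥ -2 τ ‖y‖ ‖w‖`, and the whole form is at least
`τ (‖y‖ - ‖w‖)² ≥ 0`.
-/

open Matrix

/-- The ℓ²-operator norm (spectral norm) of a real matrix: the operator norm of the
associated linear map between Euclidean spaces. -/
noncomputable def l2OpNorm {m n : ℕ} (A : Matrix (Fin m) (Fin n) ℝ) : ℝ :=
  ‖LinearMap.toContinuousLinearMap (Matrix.toEuclideanLin A)‖

open scoped Matrix.Norms.L2Operator
open WithLp

namespace Matrix

section L2OpNorm

variable {𝕜 ι κ μ : Type*} [RCLike 𝕜] [Fintype ι] [Fintype κ] [Fintype μ]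
  [DecidableEq ι] [DecidableEq κ] [DecidableEq μ]

lemma l2_opNorm_sq_eq_mul_conjTranspose (A : Matrix μ ι 𝕜) : ‖A‖ ^ 2 = ‖A * Aᴴ‖ := by
  rw [← l2_opNorm_conjTranspose A, sq, ← l2_opNorm_conjTranspose_mul_self,
    conjTranspose_conjTranspose]

lemma l2_opNorm_fromCols_sq_le (A₁ : Matrix μ ι 𝕜) (A₂ : Matrix μ κ 𝕜) :
    ‖fromCols A₁ A₂‖ ^ 2 ≤ ‖A₁‖ ^ 2 + ‖A₂‖ ^ 2 := by
  simp only [l2_opNorm_sq_eq_mul_conjTranspose, conjTranspose_fromCols_eq_fromRows_conjTranspose,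
    fromCols_mul_fromRows]
  exact norm_add_le _ _

lemma l2_opNorm_one_le : ‖(1 : Matrix ι ι 𝕜)‖ ≤ 1 := by
  rw [← diagonal_one, l2_opNorm_diagonal]
  exact (pi_norm_le_iff_of_nonneg zero_le_one).2 fun _ => norm_one.le

end L2OpNorm

section PosSemidef

variable {ι κ : Type*} [Fintype ι] [Fintype κ]

lemma dotProduct_self_eq_norm_toLp_sq (y : ι → ℝ) : y ⬝ᵥ y = ‖toLp 2 y‖ ^ 2 := by
  rw [← real_inner_self_eq_norm_sq, EuclideanSpace.inner_eq_star_dotProduct]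
  rfl

lemma abs_mulVec_dotProduct_le [DecidableEq ι] (B : Matrix κ ι ℝ) (y : ι → ℝ) (w : κ → ℝ) :
    |B *ᵥ y ⬝ᵥ w| ≤ ‖B‖ * ‖toLp 2 y‖ * ‖toLp 2 w‖ :=
  calc |B *ᵥ y ⬝ᵥ w| = |inner ℝ (toLp 2 w) (toLp 2 (B *ᵥ y))| := by
        rw [EuclideanSpace.inner_eq_star_dotProduct]; rfl
    _ ≤ ‖toLp 2 (B *ᵥ y)‖ * ‖toLp 2 w‖ := by
        rw [mul_comm]; exact abs_real_inner_le_norm _ _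
    _ ≤ ‖B‖ * ‖toLp 2 y‖ * ‖toLp 2 w‖ := by
        gcongr; exact l2_opNorm_mulVec B (toLp 2 y)

theorem posSemidef_fromBlocks_smul_one_of_l2_opNorm_le [DecidableEq ι] [DecidableEq κ]
    (B : Matrix κ ι ℝ) {τ : ℝ} (hB : ‖B‖ ≤ τ) :
    (fromBlocks (τ • 1 : Matrix ι ι ℝ) Bᵀ B (τ • 1)).PosSemidef := by
  refine PosSemidef.of_dotProduct_mulVec_nonneg ?_ fun x => ?_
  · exact IsHermitian.fromBlocks (by simp) (by simp) (by simp)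
  obtain ⟨y, w, rfl⟩ : ∃ y w, x = Sum.elim y w := ⟨x ∘ Sum.inl, x ∘ Sum.inr, by simp⟩
  have hcross := neg_le_of_abs_le (abs_mulVec_dotProduct_le B y w)
  have hτ : 0 ≤ τ := (norm_nonneg B).trans hB
  calc 0 ≤ τ * (‖toLp 2 y‖ - ‖toLp 2 w‖) ^ 2 := by positivity
    _ ≤ τ * ‖toLp 2 y‖ ^ 2 + 2 * (B *ᵥ y ⬝ᵥ w) + τ * ‖toLp 2 w‖ ^ 2 := by
        nlinarith [mul_le_mul_of_nonneg_right hB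
          (mul_nonneg (norm_nonneg (toLp 2 y)) (norm_nonneg (toLp 2 w)))]
    _ = _ := by
        simp only [fromBlocks_mulVec, star_trivial, sumElim_dotProduct_sumElim, Sum.elim_comp_inl,
          Sum.elim_comp_inr, smul_mulVec, one_mulVec, dotProduct_smul, smul_eq_mul,
          dotProduct_self_eq_norm_toLp_sq, dotProduct_add]
        rw [dotProduct_mulVec y, vecMul_transpose, dotProduct_comm w]
        ring

end PosSemidef

end Matrix

/-- **Boundary case of the Chen–Teboulle step-size condition.**
For an `m × n` real matrix `A`, with `λ = 1/√(‖A‖² + 1)` and `τ = 1/λ`, the symmetric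
block matrix `V = [[τ·I, 0, −Aᵀ], [0, τ·I, I], [−A, I, τ·I]]` is positive semidefinite. -/
theorem chen_teboulle_boundary_posSemidef (m n : ℕ)
    (A : Matrix (Fin m) (Fin n) ℝ) (lam τ : ℝ)
    (hlam : lam = 1 / Real.sqrt (l2OpNorm A ^ 2 + 1)) (hτ : τ = 1 / lam) :
    (Matrix.fromBlocks
        (Matrix.fromBlocks (τ • (1 : Matrix (Fin n) (Fin n) ℝ)) 0
          0 (τ • (1 : Matrix (Fin m) (Fin m) ℝ)))
        (Matrix.fromRows (-Aᵀ) (1 : Matrix (Fin m) (Fin m) ℝ))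
        (Matrix.fromCols (-A) (1 : Matrix (Fin m) (Fin m) ℝ))
        (τ • (1 : Matrix (Fin m) (Fin m) ℝ))).PosSemidef := by
  set B := fromCols (-A) (1 : Matrix (Fin m) (Fin m) ℝ)
  -- `l2OpNorm A` is definitionally the scoped L2 operator norm `‖A‖`.
  have hτA : τ = √(‖A‖ ^ 2 + 1) := by rw [hτ, hlam, one_div_one_div]; rfl
  have hB : ‖B‖ ≤ τ := by
    rw [hτA, Real.le_sqrt (norm_nonneg _) (by positivity)]
    calc ‖B‖ ^ 2 ≤ ‖-A‖ ^ 2 + ‖(1 : Matrix (Fin m) (Fin m) ℝ)‖ ^ 2 :=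
          l2_opNorm_fromCols_sq_le _ _
      _ ≤ ‖A‖ ^ 2 + 1 := by
        rw [norm_neg]; gcongr; exact pow_le_one₀ (norm_nonneg _) l2_opNorm_one_le
  have hdiag : fromBlocks (τ • (1 : Matrix (Fin n) (Fin n) ℝ)) 0 0
      (τ • (1 : Matrix (Fin m) (Fin m) ℝ)) = τ • (1 : Matrix (Fin n ⊕ Fin m) (Fin n ⊕ Fin m) ℝ) := by
    rw [← fromBlocks_one, fromBlocks_smul, smul_zero, smul_zero]
  have hBt : fromRows (-Aᵀ) (1 : Matrix (Fin m) (Fin m) ℝ) = Bᵀ := by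
    rw [transpose_fromCols, transpose_neg, transpose_one]
  rw [hdiag, hBt]
  exact posSemidef_fromBlocks_smul_one_of_l2_opNorm_le B hB
end

section
/- Let A be an m×n real matrix with A ≠ 0, and let τy > 2 be a real number. Set τx = ‖A Aᵀ‖ (the ℓ²-operator norm of A Aᵀ) and τz = 1. Then the symmetric block matrix V = [[τx·I, 0, −Aᵀ], [0, τz·I, I], [−A, I, τy·I]] is positive definite. -/
open Matrix

/-!
Write `v = (x, z, y)`. The quadratic form of `V` is
`τx ‖x‖² + τz ‖z‖² + τy ‖y‖² - 2 ⟪A x, y⟫ + 2 ⟪z, y⟫`. Completing the squares `‖A x - y‖²` and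
`‖z + y‖²` and using `‖A x‖ ≤ ‖A‖ ‖x‖` bounds it below by `(τy - 2) ‖y‖²` as soon as `τx ≥ ‖A‖²` and
`τz ≥ 1`; when `y = 0` it is `τx ‖x‖² + τz ‖z‖²`. The C⋆-identity `‖A Aᵀ‖ = ‖A‖²` gives
`τx = ‖A‖² > 0` for `A ≠ 0`.
-/

open scoped Matrix.Norms.L2Operator

namespace Matrix

variable {m n : Type*} [Fintype m] [Fintype n]

lemma dotProduct_self_eq_norm_sq (v : n → ℝ) : v ⬝ᵥ v = ‖WithLp.toLp 2 v‖ ^ 2 := by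
  rw [← real_inner_self_eq_norm_sq, EuclideanSpace.inner_eq_star_dotProduct]
  simp

lemma dotProduct_self_nonneg (v : n → ℝ) : 0 ≤ v ⬝ᵥ v := by
  simpa using dotProduct_star_self_nonneg v

lemma dotProduct_self_pos {v : n → ℝ} (hv : v ≠ 0) : 0 < v ⬝ᵥ v := by
  simpa using dotProduct_star_self_pos_iff.mpr hv

lemma neg_two_mul_dotProduct_le (v w : n → ℝ) : -(2 * (v ⬝ᵥ w)) ≤ v ⬝ᵥ v + w ⬝ᵥ w := by
  have := dotProduct_self_nonneg (v + w)
  simp only [add_dotProduct, dotProduct_add, dotProduct_comm w v] at this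
  linarith

variable [DecidableEq n]

lemma mulVec_dotProduct_mulVec_self_le (A : Matrix m n ℝ) (x : n → ℝ) :
    A *ᵥ x ⬝ᵥ A *ᵥ x ≤ ‖A‖ ^ 2 * (x ⬝ᵥ x) := by
  rw [dotProduct_self_eq_norm_sq, dotProduct_self_eq_norm_sq, ← mul_pow]
  exact pow_le_pow_left₀ (norm_nonneg _) (A.l2_opNorm_mulVec (WithLp.toLp 2 x)) 2

lemma two_mul_mulVec_dotProduct_le (A : Matrix m n ℝ) (x : n → ℝ) (y : m → ℝ) :
    2 * (A *ᵥ x ⬝ᵥ y) ≤ ‖A‖ ^ 2 * (x ⬝ᵥ x) + y ⬝ᵥ y := by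
  have := dotProduct_self_nonneg (A *ᵥ x - y)
  simp only [sub_dotProduct, dotProduct_sub, dotProduct_comm y] at this
  linarith [mulVec_dotProduct_mulVec_self_le A x]

end Matrix

lemma l2OpNorm_mul_transpose_self {m n : ℕ} (A : Matrix (Fin m) (Fin n) ℝ) :
    l2OpNorm (A * Aᵀ) = ‖A‖ ^ 2 := by
  change ‖Aᵀᴴ * Aᵀ‖ = _
  rw [l2_opNorm_conjTranspose_mul_self, ← conjTranspose_eq_transpose_of_trivial,
    l2_opNorm_conjTranspose, sq]

section ScalingMatrix

variable {m n : Type*} [DecidableEq m] [DecidableEq n]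

/-- The paper's `V`, with coordinates ordered `(x, z, y)`. -/
def scalingMatrix (A : Matrix m n ℝ) (τx τz τy : ℝ) : Matrix ((n ⊕ m) ⊕ m) ((n ⊕ m) ⊕ m) ℝ :=
  fromBlocks (fromBlocks (τx • 1) 0 0 (τz • 1)) (fromRows (-Aᵀ) 1) (fromCols (-A) 1) (τy • 1)

lemma scalingMatrix_isHermitian (A : Matrix m n ℝ) (τx τz τy : ℝ) :
    (scalingMatrix A τx τz τy).IsHermitian := by
  simp only [IsHermitian, scalingMatrix, conjTranspose_eq_transpose_of_trivial,
    fromBlocks_transpose, transpose_smul, transpose_one, transpose_zero, transpose_fromCols,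
    transpose_neg, transpose_fromRows, transpose_transpose]

variable [Fintype m] [Fintype n]

lemma sumElim_dotProduct_scalingMatrix_mulVec (A : Matrix m n ℝ) (τx τz τy : ℝ)
    (x : n → ℝ) (z y : m → ℝ) :
    Sum.elim (Sum.elim x z) y ⬝ᵥ scalingMatrix A τx τz τy *ᵥ Sum.elim (Sum.elim x z) y =
      τx * (x ⬝ᵥ x) + τz * (z ⬝ᵥ z) + τy * (y ⬝ᵥ y) - 2 * (A *ᵥ x ⬝ᵥ y) + 2 * (z ⬝ᵥ y) := by
  simp only [scalingMatrix, fromBlocks_mulVec, Sum.elim_comp_inl, Sum.elim_comp_inr,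
    smul_mulVec, one_mulVec, zero_mulVec, add_zero, zero_add, fromRows_mulVec, neg_mulVec,
    fromCols_mulVec, sumElim_dotProduct_sumElim, dotProduct_add, dotProduct_smul, smul_eq_mul,
    dotProduct_neg]
  rw [mulVec_transpose, dotProduct_comm x (y ᵥ* A), ← dotProduct_mulVec,
    dotProduct_comm y (A *ᵥ x), dotProduct_comm y z]
  ring

theorem scalingMatrix_posDef (A : Matrix m n ℝ) {τx τz τy : ℝ} (hτx : ‖A‖ ^ 2 ≤ τx)
    (hτx₀ : 0 < τx) (hτz : 1 ≤ τz) (hτy : 2 < τy) : (scalingMatrix A τx τz τy).PosDef := by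
  refine posDef_iff_dotProduct_mulVec.mpr ⟨scalingMatrix_isHermitian A τx τz τy, fun v hv => ?_⟩
  obtain ⟨x, z, y, rfl⟩ : ∃ x z y, v = Sum.elim (Sum.elim x z) y :=
    ⟨(v ∘ Sum.inl) ∘ Sum.inl, (v ∘ Sum.inl) ∘ Sum.inr, v ∘ Sum.inr,
      by simp only [Sum.elim_comp_inl_inr]⟩
  rw [star_trivial, sumElim_dotProduct_scalingMatrix_mulVec]
  by_cases hy : y = 0
  · subst hy
    have hxz : x ≠ 0 ∨ z ≠ 0 := by
      contrapose! hv
      rw [hv.1, hv.2, Sum.elim_zero_zero, Sum.elim_zero_zero]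
    simp only [dotProduct_zero, mul_zero, add_zero, sub_zero]
    have hx := mul_nonneg hτx₀.le (dotProduct_self_nonneg x)
    have hz := mul_nonneg (zero_le_one.trans hτz) (dotProduct_self_nonneg z)
    rcases hxz with hx₀ | hz₀
    · linarith [mul_pos hτx₀ (dotProduct_self_pos hx₀)]
    · linarith [mul_pos (zero_lt_one.trans_le hτz) (dotProduct_self_pos hz₀)]
  · linarith [two_mul_mulVec_dotProduct_le A x y, neg_two_mul_dotProduct_le z y,
      mul_nonneg (sub_nonneg.2 hτx) (dotProduct_self_nonneg x),
      mul_nonneg (sub_nonneg.2 hτz) (dotProduct_self_nonneg z),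
      mul_pos (sub_pos.2 hτy) (dotProduct_self_pos hy)]

end ScalingMatrix

/-- **Unequal step-size parameters in the scaled-norm analysis.**
For a nonzero `m × n` real matrix `A` and `τy > 2`, with `τx = ‖A Aᵀ‖` (ℓ²-operator
norm) and `τz = 1`, the symmetric block matrix
`V = [[τx·I, 0, −Aᵀ], [0, τz·I, I], [−A, I, τy·I]]` is positive definite. -/
theorem chen_teboulle_unequal_steps_posDef (m n : ℕ)
    (A : Matrix (Fin m) (Fin n) ℝ) (hA : A ≠ 0)
    (τx τz τy : ℝ) (hτy : 2 < τy)
    (hτx : τx = l2OpNorm (A * Aᵀ)) (hτz : τz = 1) :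
    (Matrix.fromBlocks
        (Matrix.fromBlocks (τx • (1 : Matrix (Fin n) (Fin n) ℝ)) 0
          0 (τz • (1 : Matrix (Fin m) (Fin m) ℝ)))
        (Matrix.fromRows (-Aᵀ) (1 : Matrix (Fin m) (Fin m) ℝ))
        (Matrix.fromCols (-A) (1 : Matrix (Fin m) (Fin m) ℝ))
        (τy • (1 : Matrix (Fin m) (Fin m) ℝ))).PosDef := by
  rw [l2OpNorm_mul_transpose_self] at hτx
  have hτx₀ : 0 < τx := hτx ▸ pow_pos (norm_pos_iff.mpr hA) 2
  exact scalingMatrix_posDef A hτx.ge hτx₀ hτz.ge hτy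
end

section
/- Let E and F be real inner product spaces, A : E → F a continuous linear map with adjoint A*, and f : E → ℝ, g : F → ℝ functions. Suppose u is a subgradient of f at x, u' is a subgradient of f at x', v is a subgradient of g at z, and v' is a subgradient of g at z'. Then for all y, y' ∈ F: ⟪(u + A*y) − (u' + A*y'), x − x'⟫ + ⟪(v − y) − (v' − y'), z − z'⟫ + ⟪(z − Ax) − (z' − Ax'), y − y'⟫ ≥ 0. -/
/-!
The operator splits as `(∂f × ∂g × 0) + S`, where `S (x, z, y) = (A* y, -y, z - A x)` is a
skew-symmetric linear map, so `⟪S p - S p', p - p'⟫ = 0`. Monotonicity thus reduces to that of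
the subdifferentials, obtained by adding the two subgradient inequalities.
-/

open RealInnerProductSpace

def IsSubgradientAt {E : Type*} [NormedAddCommGroup E] [InnerProductSpace ℝ E]
    (f : E → ℝ) (u : E) (x : E) : Prop :=
  ∀ w : E, f x + ⟪u, w - x⟫ ≤ f w

theorem IsSubgradientAt.inner_sub_nonneg {E : Type*} [NormedAddCommGroup E]
    [InnerProductSpace ℝ E] {f : E → ℝ} {u u' x x' : E}
    (hu : IsSubgradientAt f u x) (hu' : IsSubgradientAt f u' x') :
    0 ≤ ⟪u - u', x - x'⟫ := by
  have h := add_le_add (hu x') (hu' x)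
  rw [← neg_sub x x', inner_neg_right] at h
  rw [inner_sub_left]
  linarith

theorem inner_saddle_skew_eq_zero {E F : Type*}
    [NormedAddCommGroup E] [InnerProductSpace ℝ E] [CompleteSpace E]
    [NormedAddCommGroup F] [InnerProductSpace ℝ F] [CompleteSpace F]
    (A : E →L[ℝ] F) (dx : E) (dz dy : F) :
    ⟪ContinuousLinearMap.adjoint A dy, dx⟫ + ⟪-dy, dz⟫ + ⟪dz - A dx, dy⟫ = 0 := by
  rw [ContinuousLinearMap.adjoint_inner_left, inner_neg_left, inner_sub_left,
    real_inner_comm dy dz, real_inner_comm dy (A dx)]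
  ring

/-- **Monotonicity of the primal–dual Kuhn–Tucker operator**
`𝒜(x, z, y) = (∂f(x) + A*y, ∂g(z) − y, z − Ax)` on `E × F × F`. -/
theorem kuhn_tucker_operator_monotone {E F : Type*}
    [NormedAddCommGroup E] [InnerProductSpace ℝ E] [CompleteSpace E]
    [NormedAddCommGroup F] [InnerProductSpace ℝ F] [CompleteSpace F]
    (A : E →L[ℝ] F) (f : E → ℝ) (g : F → ℝ)
    (x x' u u' : E) (z z' v v' : F)
    (hu : IsSubgradientAt f u x) (hu' : IsSubgradientAt f u' x')
    (hv : IsSubgradientAt g v z) (hv' : IsSubgradientAt g v' z')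
    (y y' : F) :
    0 ≤ ⟪(u + (ContinuousLinearMap.adjoint A) y) - (u' + (ContinuousLinearMap.adjoint A) y'),
          x - x'⟫
        + ⟪(v - y) - (v' - y'), z - z'⟫
        + ⟪(z - A x) - (z' - A x'), y - y'⟫ := by
  have hskew := inner_saddle_skew_eq_zero A (x - x') (z - z') (y - y')
  have hf := hu.inner_sub_nonneg hu'
  have hg := hv.inner_sub_nonneg hv'
  have hsplit_x : u + A.adjoint y - (u' + A.adjoint y') = (u - u') + A.adjoint (y - y') := by
    rw [map_sub]; abel
  have hsplit_z : v - y - (v' - y') = (v - v') + -(y - y') := by abel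
  have hsplit_y : z - A x - (z' - A x') = (z - z') - A (x - x') := by rw [map_sub]; abel
  rw [hsplit_x, hsplit_z, hsplit_y, inner_add_left, inner_add_left]
  linarith
end
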